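/- arXiv:2308.07004 — 5 statements merged into one kernel-verified Lean document; each statement's English description precedes it below -/
import Mathlib

section
/- Let X = {x₁,…,xₙ} be n distinct positive integers contained in [ℓ, 2ℓ]. Under the hypothesis that for every c·ℓ²/n ≤ t ≤ Σ(X)/2 there exists a subset-sum t' of X with 0 ≤ t' − t ≤ 8ℓ/n (density lemma), the following exchange holds: given any multiple-of-ε profit instance and parameter Δ with the setup of the Greedy Exchange Lemma, one can replace a high-index profit amount p* ∈ (B, B+2] by a subset R of low-index items with total profit p̃ satisfying 1/Δ ≤ p̃ − (1−ε)p* ≤ 9/Δ, and moreover p* − p̃ ≥ ε·p* − 9/Δ > 0 when p* > B = 9c·ε⁻¹/Δ. -/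
lemma div_lt_mul_of_mul_inv_div_lt {a c ε Δ x : ℝ} (ha : 0 ≤ a) (hc : 1 ≤ c) (hε : 0 < ε)
    (hΔ : 0 < Δ) (h : a * c * ε⁻¹ / Δ < x) : a / Δ < ε * x :=
  calc a / Δ ≤ a * c / Δ := by gcongr; exact le_mul_of_one_le_right ha hc
    _ = ε * (a * c * ε⁻¹ / Δ) := by field_simp
    _ < ε * x := by gcongr

lemma le_one_sub_mul_of_two_mul_le {B ε x : ℝ} (hε : ε ≤ 1 / 2) (hx : 0 ≤ x) (h : 2 * B ≤ x) :
    B ≤ (1 - ε) * x := by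
  nlinarith

theorem greedy_exchange_replacement_general {ι : Type*} (ε Δ c : ℝ)
    (hε : 0 < ε) (hε2 : ε < 1 / 2) (hΔ : 0 < Δ) (hc : 1 ≤ c)
    (I' : Finset ι) (p : ι → ℝ)
    (hdensity : ∀ t : ℝ, c * ε⁻¹ / Δ ≤ t → t ≤ (∑ i ∈ I', p i) / 2 →
      ∃ R : Finset ι, R ⊆ I' ∧ 0 ≤ (∑ i ∈ R, p i) - t ∧ (∑ i ∈ R, p i) - t ≤ 8 / Δ)
    (pstar : ℝ)
    (hB1 : 9 * c * ε⁻¹ / Δ < pstar)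
    (hrange : (1 - ε) * pstar + 1 / Δ ≤ (∑ i ∈ I', p i) / 2) :
    ∃ R : Finset ι, R ⊆ I' ∧
      1 / Δ ≤ (∑ i ∈ R, p i) - (1 - ε) * pstar ∧
      (∑ i ∈ R, p i) - (1 - ε) * pstar ≤ 9 / Δ ∧
      ε * pstar - 9 / Δ ≤ pstar - (∑ i ∈ R, p i) ∧
      0 < ε * pstar - 9 / Δ := by
  have hB : 0 ≤ c * ε⁻¹ / Δ := by positivity
  have hgap : 9 / Δ < ε * pstar :=
    div_lt_mul_of_mul_inv_div_lt (by norm_num) hc hε hΔ hB1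
  have hthreshold : c * ε⁻¹ / Δ ≤ (1 - ε) * pstar + 1 / Δ := by
    have hB9 : 9 * c * ε⁻¹ / Δ = 9 * (c * ε⁻¹ / Δ) := by ring
    have hhalf := le_one_sub_mul_of_two_mul_le (B := c * ε⁻¹ / Δ) (x := pstar) hε2.le
      (by linarith) (by linarith)
    have hinv : 0 ≤ 1 / Δ := by positivity
    linarith
  -- The overshoot in [0, 8/Δ] above the target (1 - ε)p* + 1/Δ is what lands p̃ - (1 - ε)p* in [1/Δ, 9/Δ].
  obtain ⟨R, hR, hlower, hupper⟩ := hdensity _ hthreshold hrange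
  have hsplit : 9 / Δ = 8 / Δ + 1 / Δ := by ring
  exact ⟨R, hR, by linarith, by linarith, by linarith, by linarith⟩

/-- Greedy-exchange ingredient. Profits pᵢ are multiples of ε in [1,2);
c ≥ 1 is a universal constant, Δ a parameter, B := 9c·ε⁻¹/Δ. Under the density hypothesis
(every target t with c·ε⁻¹/Δ ≤ t ≤ (Σ p)/2 is approximated from above within 8/Δ by a
subset sum of the low-index items I'), for any p* ∈ (B, B+2] there is a subset R of I'
with total profit p̃ satisfying 1/Δ ≤ p̃ − (1−ε)p* ≤ 9/Δ, and moreover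
p* − p̃ ≥ ε·p* − 9/Δ > 0. -/
theorem greedy_exchange_replacement {ι : Type*} (ε Δ c : ℝ)
    (hε : 0 < ε) (hε2 : ε < 1 / 2) (hΔ : 0 < Δ) (hc : 1 ≤ c)
    (I' : Finset ι) (p : ι → ℝ)
    (hp : ∀ i ∈ I', 1 ≤ p i ∧ p i < 2)
    (hmult : ∀ i ∈ I', ∃ m : ℕ, p i = (m : ℝ) * ε)
    (hdensity : ∀ t : ℝ, c * ε⁻¹ / Δ ≤ t → t ≤ (∑ i ∈ I', p i) / 2 →
      ∃ R : Finset ι, R ⊆ I' ∧ 0 ≤ (∑ i ∈ R, p i) - t ∧ (∑ i ∈ R, p i) - t ≤ 8 / Δ)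
    (pstar : ℝ)
    (hB1 : 9 * c * ε⁻¹ / Δ < pstar) (hB2 : pstar ≤ 9 * c * ε⁻¹ / Δ + 2)
    (hrange : (1 - ε) * pstar + 1 / Δ ≤ (∑ i ∈ I', p i) / 2) :
    ∃ R : Finset ι, R ⊆ I' ∧
      1 / Δ ≤ (∑ i ∈ R, p i) - (1 - ε) * pstar ∧
      (∑ i ∈ R, p i) - (1 - ε) * pstar ≤ 9 / Δ ∧
      ε * pstar - 9 / Δ ≤ pstar - (∑ i ∈ R, p i) ∧
      0 < ε * pstar - 9 / Δ :=
  greedy_exchange_replacement_general ε Δ c hε hε2 hΔ hc I' p hdensity pstar hB1 hrange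
end

section
/- Suppose items have profits in [1,2] and are sorted in non-increasing order of unit profit pᵢ/wᵢ. Define the greedy step function f̃ with breakpoints at prefix weight sums W_k = w₁+⋯+w_k taking value P_k = p₁+⋯+p_k on [W_k, W_{k+1}). Then for all x in [0, W_n], f_I(x) − 2 ≤ f̃(x) ≤ f_I(x), i.e., the greedy prefix function approximates the knapsack profit function f_I with additive error at most max_i pᵢ ≤ 2. -/
/-- The knapsack profit function of a finite set of items:
`f_I(x) = max over J ⊆ I with Σ_{i∈J} wᵢ ≤ x of Σ_{i∈J} pᵢ`. -/
noncomputable def knapProfit {ι : Type*} (I : Finset ι) (w p : ι → ℝ) (x : ℝ) : ℝ :=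
  sSup {v | ∃ J : Finset ι, J ⊆ I ∧ (∑ i ∈ J, w i) ≤ x ∧ v = ∑ i ∈ J, p i}

/-!
Exchange argument. Let `k` be the first item that does not fit into the greedy prefix
`K = {0, …, k-1}` and `r = p k / w k` its unit profit. Every item outside `K` has unit profit at
most `r` and every item of `K` at least `r`, so for any packing `J`,
`Σ_J p - Σ_K p ≤ r (Σ_J w - Σ_K w) ≤ r w k = p k ≤ 2`, since `Σ_J w ≤ x < Σ_K w + w k`.
-/

open Finset

section Knapsack

variable {ι : Type*} {I J : Finset ι} {w p : ι → ℝ} {x : ℝ}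

lemma knapProfit_set_finite (I : Finset ι) (w p : ι → ℝ) (x : ℝ) :
    {v | ∃ J : Finset ι, J ⊆ I ∧ (∑ i ∈ J, w i) ≤ x ∧ v = ∑ i ∈ J, p i}.Finite := by
  refine (I.powerset.image fun J => ∑ i ∈ J, p i).finite_toSet.subset ?_
  rintro _ ⟨J, hJ, -, rfl⟩
  exact mem_image.2 ⟨J, mem_powerset.2 hJ, rfl⟩

lemma le_knapProfit (hJ : J ⊆ I) (hJx : ∑ i ∈ J, w i ≤ x) :
    ∑ i ∈ J, p i ≤ knapProfit I w p x :=
  le_csSup (knapProfit_set_finite I w p x).bddAbove ⟨J, hJ, hJx, rfl⟩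

lemma knapProfit_le {B : ℝ} (hJ : J ⊆ I) (hJx : ∑ i ∈ J, w i ≤ x)
    (hB : ∀ J' ⊆ I, ∑ i ∈ J', w i ≤ x → ∑ i ∈ J', p i ≤ B) :
    knapProfit I w p x ≤ B := by
  refine csSup_le ⟨_, J, hJ, hJx, rfl⟩ ?_
  rintro _ ⟨J', hJ', hJ'x, rfl⟩
  exact hB J' hJ' hJ'x

lemma sum_le_sum_add_mul_sub_of_ratio [DecidableEq ι] {K : Finset ι} {r : ℝ}
    (hJK : ∀ i ∈ J \ K, p i ≤ r * w i) (hKJ : ∀ i ∈ K \ J, r * w i ≤ p i) :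
    ∑ i ∈ J, p i ≤ ∑ i ∈ K, p i + r * (∑ i ∈ J, w i - ∑ i ∈ K, w i) := by
  have hexcess : ∑ i ∈ J, (p i - r * w i) - ∑ i ∈ K, (p i - r * w i) ≤ 0 := by
    rw [← sum_sdiff_sub_sum_sdiff]
    have hJ : ∑ i ∈ J \ K, (p i - r * w i) ≤ 0 :=
      sum_nonpos fun i hi => sub_nonpos.2 (hJK i hi)
    have hK : 0 ≤ ∑ i ∈ K \ J, (p i - r * w i) :=
      sum_nonneg fun i hi => sub_nonneg.2 (hKJ i hi)
    linarith
  simp only [sum_sub_distrib, ← mul_sum] at hexcess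
  linarith

end Knapsack

lemma sum_le_sum_range_add_of_antitone_ratio {n k : ℕ} {w p : ℕ → ℝ} {J : Finset ℕ}
    (hw : ∀ i < n, 0 < w i) (hsorted : ∀ i j, i ≤ j → j < n → p j / w j ≤ p i / w i)
    (hkn : k < n) (hpk : 0 ≤ p k) (hJ : J ⊆ range n)
    (hJw : ∑ i ∈ J, w i ≤ ∑ i ∈ range (k + 1), w i) :
    ∑ i ∈ J, p i ≤ ∑ i ∈ range k, p i + p k := by
  set r := p k / w k
  have hwk := hw k hkn
  have hJK : ∀ i ∈ J \ range k, p i ≤ r * w i := by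
    intro i hi
    obtain ⟨hiJ, hik⟩ := mem_sdiff.1 hi
    have hin := mem_range.1 (hJ hiJ)
    have := hsorted k i (by simpa using hik) hin
    rwa [div_le_iff₀ (hw i hin)] at this
  have hKJ : ∀ i ∈ range k \ J, r * w i ≤ p i := by
    intro i hi
    have hik := mem_range.1 (mem_sdiff.1 hi).1
    have := hsorted i k hik.le hkn
    rwa [le_div_iff₀ (hw i (hik.trans hkn))] at this
  have hgap : r * (∑ i ∈ J, w i - ∑ i ∈ range k, w i) ≤ r * w k := by
    rw [sum_range_succ] at hJw
    exact mul_le_mul_of_nonneg_left (by linarith) (div_nonneg hpk hwk.le)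
  have hrwk : r * w k = p k := div_mul_cancel₀ _ hwk.ne'
  linarith [sum_le_sum_add_mul_sub_of_ratio hJK hKJ]

theorem greedy_prefix_approx_general (n : ℕ) (w p : ℕ → ℝ)
    (hw : ∀ i < n, 0 < w i) (hp : ∀ i < n, 1 ≤ p i ∧ p i ≤ 2)
    (hsorted : ∀ i j, i ≤ j → j < n → p j / w j ≤ p i / w i)
    (x : ℝ)
    (k : ℕ) (hkn : k ≤ n)
    (hk1 : ∑ i ∈ Finset.range k, w i ≤ x)
    (hk2 : k < n → x < ∑ i ∈ Finset.range (k + 1), w i) :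
    knapProfit (Finset.range n) w p x - 2 ≤ ∑ i ∈ Finset.range k, p i ∧
      ∑ i ∈ Finset.range k, p i ≤ knapProfit (Finset.range n) w p x := by
  have hK : range k ⊆ range n := range_subset_range.2 hkn
  have hbound : ∀ J ⊆ range n, ∑ i ∈ J, w i ≤ x → ∑ i ∈ J, p i ≤ ∑ i ∈ range k, p i + 2 := by
    intro J hJ hJx
    rcases hkn.lt_or_eq with hk | rfl
    · have hpk := hp k hk
      have := sum_le_sum_range_add_of_antitone_ratio hw hsorted hk (by linarith) hJ
        (hJx.trans (hk2 hk).le)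
      linarith
    · have : ∑ i ∈ J, p i ≤ ∑ i ∈ range k, p i :=
        sum_le_sum_of_subset_of_nonneg hJ fun i hi _ => by linarith [hp i (mem_range.1 hi)]
      linarith
  exact ⟨by linarith [knapProfit_le hK hk1 hbound], le_knapProfit hK hk1⟩

/-- Items with profits in [1,2], sorted by non-increasing unit profit.
The greedy step function takes value P_k = p 0 + ⋯ + p (k-1) on [W_k, W_{k+1}) where
W_k = w 0 + ⋯ + w (k-1); it approximates f_I within additive error 2 from below:
for x ∈ [0, W_n], f_I(x) − 2 ≤ P_k ≤ f_I(x), k being the largest index with W_k ≤ x. -/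
theorem greedy_prefix_approx (n : ℕ) (w p : ℕ → ℝ)
    (hw : ∀ i < n, 0 < w i) (hp : ∀ i < n, 1 ≤ p i ∧ p i ≤ 2)
    (hsorted : ∀ i j, i ≤ j → j < n → p j / w j ≤ p i / w i)
    (x : ℝ) (hx : 0 ≤ x) (hxle : x ≤ ∑ i ∈ Finset.range n, w i)
    (k : ℕ) (hkn : k ≤ n)
    (hk1 : ∑ i ∈ Finset.range k, w i ≤ x)
    (hk2 : k < n → x < ∑ i ∈ Finset.range (k + 1), w i) :
    knapProfit (Finset.range n) w p x - 2 ≤ ∑ i ∈ Finset.range k, p i ∧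
      ∑ i ∈ Finset.range k, p i ≤ knapProfit (Finset.range n) w p x :=
  greedy_prefix_approx_general n w p hw hp hsorted x k hkn hk1 hk2
end

section
/- If S' is a subset of a finite set S ⊆ ℝ obtained by repeatedly deleting elements v whenever there exist u < v < w in the current set with w ≤ u + Δ, until no such triple exists, then S' is a Δ-additive approximation of S: for every x ∈ S there exists x' ∈ S' with x − Δ ≤ x' ≤ x. -/
/-- The sparsification process: `Sparsify Δ S S'` means S' is obtained from the finite set S
by repeatedly deleting an element v whenever there exist u < v < w in the current set with
w ≤ u + Δ. -/
inductive Sparsify (Δ : ℝ) : Finset ℝ → Finset ℝ → Prop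
  | refl (S : Finset ℝ) : Sparsify Δ S S
  | step (S T : Finset ℝ) (u v w : ℝ) :
      Sparsify Δ S T → u ∈ T → v ∈ T → w ∈ T →
      u < v → v < w → w ≤ u + Δ → Sparsify Δ S (T.erase v)

def IsAdditiveApprox (Δ : ℝ) (S S' : Finset ℝ) : Prop :=
  ∀ x ∈ S, ∃ x' ∈ S', x - Δ ≤ x' ∧ x' ≤ x

theorem IsAdditiveApprox.refl {Δ : ℝ} (hΔ : 0 ≤ Δ) (S : Finset ℝ) : IsAdditiveApprox Δ S S :=
  fun x hx => ⟨x, hx, by linarith, le_rfl⟩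

/-- A witness `v` lost by the deletion is replaced by `w` if `w ≤ x`, and by `u` otherwise,
since then `x - Δ < w - Δ ≤ u`. -/
theorem IsAdditiveApprox.erase {Δ : ℝ} {S T : Finset ℝ} {u v w : ℝ}
    (happrox : IsAdditiveApprox Δ S T) (hu : u ∈ T) (hw : w ∈ T)
    (huv : u < v) (hvw : v < w) (hwu : w ≤ u + Δ) :
    IsAdditiveApprox Δ S (T.erase v) := by
  intro x hx
  obtain ⟨x', hx', hlow, hhigh⟩ := happrox x hx
  by_cases hxv : x' = v
  · subst hxv
    by_cases hwx : w ≤ x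
    · exact ⟨w, Finset.mem_erase.mpr ⟨hvw.ne', hw⟩, by linarith, hwx⟩
    · exact ⟨u, Finset.mem_erase.mpr ⟨huv.ne, hu⟩, by linarith, by linarith⟩
  · exact ⟨x', Finset.mem_erase.mpr ⟨hxv, hx'⟩, hlow, hhigh⟩

theorem Sparsify.isAdditiveApprox {Δ : ℝ} (hΔ : 0 ≤ Δ) {S S' : Finset ℝ}
    (h : Sparsify Δ S S') : IsAdditiveApprox Δ S S' := by
  induction h with
  | refl => exact .refl hΔ S
  | step _ _ _ _ _ hu _ hw huv hvw hwu ih => exact ih.erase hu hw huv hvw hwu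

/-- Any set S' obtained from S by the sparsification process is a Δ-additive
approximation of S: every x ∈ S has x' ∈ S' with x − Δ ≤ x' ≤ x. -/
theorem sparsify_additive_approx (Δ : ℝ) (hΔ : 0 < Δ) (S S' : Finset ℝ)
    (h : Sparsify Δ S S') :
    ∀ x ∈ S, ∃ x' ∈ S', x - Δ ≤ x' ∧ x' ≤ x :=
  h.isAdditiveApprox hΔ.le
end

section
/- Let P be a monotone point set with no degenerate points, and let τ be its convex number (the number of maximal runs in the apex/base indicator sequence). Then P decomposes into τ blocks P = B[1] ∘ B[2] ∘ ⋯ ∘ B[τ], where consecutive blocks share an endpoint and each block is an upper convex hull or a lower convex hull. -/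
open Pointwise

/-- A monotone point set: points p₀, …, p_{k−1} with nondecreasing coordinates and
x_{i+2} > x_i. -/
structure MPS where
  k : ℕ
  pts : ℕ → ℝ × ℝ
  k_pos : 0 < k
  mono_x : ∀ i, i + 1 < k → (pts i).1 ≤ (pts (i + 1)).1
  mono_y : ∀ i, i + 1 < k → (pts i).2 ≤ (pts (i + 1)).2
  strict_x : ∀ i, i + 2 < k → (pts i).1 < (pts (i + 2)).1

/-- q lies on or below the segment from a to b. -/
def belowSeg (a b q : ℝ × ℝ) : Prop :=
  ∃ t : ℝ, 0 ≤ t ∧ t ≤ 1 ∧ q.1 = (1 - t) * a.1 + t * b.1 ∧ q.2 ≤ (1 - t) * a.2 + t * b.2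

/-- q lies on the segment from a to b. -/
def onSeg (a b q : ℝ × ℝ) : Prop :=
  ∃ t : ℝ, 0 ≤ t ∧ t ≤ 1 ∧ q.1 = (1 - t) * a.1 + t * b.1 ∧ q.2 = (1 - t) * a.2 + t * b.2

/-- q lies strictly above the line through a and b (a.1 < b.1 in our uses). -/
def strictlyAbove (a b q : ℝ × ℝ) : Prop :=
  (b.2 - a.2) * (q.1 - a.1) < (b.1 - a.1) * (q.2 - a.2)

/-- q lies strictly below the line through a and b. -/
def strictlyBelow (a b q : ℝ × ℝ) : Prop :=
  (b.1 - a.1) * (q.2 - a.2) < (b.2 - a.2) * (q.1 - a.1)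

/-- The region R(P): points with x in the x-range of P, 0 ≤ y, lying on or below the
polyline through the points of P. -/
def MPS.region (P : MPS) : Set (ℝ × ℝ) :=
  {q | 0 ≤ q.2 ∧ ((P.k = 1 ∧ q.1 = (P.pts 0).1 ∧ q.2 ≤ (P.pts 0).2) ∨
    ∃ i, i + 1 < P.k ∧ belowSeg (P.pts i) (P.pts (i + 1)) q)}

/-- The upper boundary of R(P). -/
def MPS.upperBoundary (P : MPS) : Set (ℝ × ℝ) :=
  {q | q ∈ P.region ∧ ∀ y : ℝ, q.2 < y → (q.1, y) ∉ P.region}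

/-- Point i of P is an apex: an endpoint, or strictly above the segment joining its
neighbours. -/
def MPS.IsApex (P : MPS) (i : ℕ) : Prop :=
  i < P.k ∧ (i = 0 ∨ i = P.k - 1 ∨
    strictlyAbove (P.pts (i - 1)) (P.pts (i + 1)) (P.pts i))

/-- Point i of P is a base: an interior point strictly below the segment joining its
neighbours. -/
def MPS.IsBase (P : MPS) (i : ℕ) : Prop :=
  0 < i ∧ i + 1 < P.k ∧ strictlyBelow (P.pts (i - 1)) (P.pts (i + 1)) (P.pts i)

/-- Point i of P is degenerate: an interior point lying on the segment joining its
neighbours. -/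
def MPS.IsDegenerate (P : MPS) (i : ℕ) : Prop :=
  0 < i ∧ i + 1 < P.k ∧ onSeg (P.pts (i - 1)) (P.pts (i + 1)) (P.pts i)

def MPS.NoDegenerate (P : MPS) : Prop := ∀ i, ¬ P.IsDegenerate i

/-- Left endpoint of the x-range of P. -/
def MPS.lo (P : MPS) : ℝ := (P.pts 0).1

/-- Right endpoint of the x-range of P. -/
def MPS.hi (P : MPS) : ℝ := (P.pts (P.k - 1)).1

/-- The upper-boundary function g[P]. -/
noncomputable def MPS.gFun (P : MPS) (x : ℝ) : ℝ := sSup {y | (x, y) ∈ P.region}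

/-- V is a minimal monotone point set for its region (this characterises V = P ⊕ Q
when region V = region P + region Q). -/
def MPS.Minimal (V : MPS) : Prop := ∀ W : MPS, W.region = V.region → V.k ≤ W.k

/-- The convex number of P: the number of maximal constant runs of the apex/base
indicator sequence. -/
noncomputable def MPS.convexNumber (P : MPS) : ℕ :=
  1 + Set.ncard {i : ℕ | i + 1 < P.k ∧ ¬ (P.IsApex (i + 1) ↔ P.IsApex i)}

/-!
Without degenerate points every interior point is an apex or a base, so the apex indicator
alone decides on which side of its neighbours' chord a point lies. Cutting the index range
right after each of the `τ - 1` places where the indicator changes gives `τ` blocks sharing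
their endpoints; the interior of each block lies in a single constant run of the indicator,
so the block is an upper or a lower convex hull.
-/

section Runs

variable {α : Type*}

lemma apply_eq_of_forall_apply_succ_eq {a : ℕ → α} {l r : ℕ}
    (h : ∀ p, l ≤ p → p < r → a (p + 1) = a p) {i : ℕ} (hli : l ≤ i) (hir : i ≤ r) :
    a i = a l := by
  induction i, hli using Nat.le_induction with
  | base => rfl
  | succ i hli ih => rw [h i hli (by omega), ih (by omega)]

variable (a : ℕ → α) (k : ℕ)

def IsChangePoint (i : ℕ) : Prop := i + 1 < k ∧ a (i + 1) ≠ a i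

lemma finite_ofPred_isChangePoint : (Set.ofPred (IsChangePoint a k)).Finite :=
  (Set.finite_Iio k).subset fun _ hi => Nat.lt_of_succ_lt hi.1

noncomputable def changeCount : ℕ := (Set.ofPred (IsChangePoint a k)).ncard

/-- Run `j` of `a` on `[0, k)` is `[runBoundary a k j, runBoundary a k (j + 1)]`: the runs are
cut right after each change point, and the last run ends at `k - 1`. -/
noncomputable def runBoundary : ℕ → ℕ
  | 0 => 0
  | j + 1 =>
    if j < changeCount a k then Nat.nth (IsChangePoint a k) j + 1 else k - 1

variable {a k}

lemma changeCount_eq_card : changeCount a k = (finite_ofPred_isChangePoint a k).toFinset.card :=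
  Set.ncard_eq_toFinset_card _ _

lemma nth_isChangePoint_add_one_lt {n : ℕ} (hn : n < changeCount a k) :
    Nat.nth (IsChangePoint a k) n + 1 < k :=
  (Nat.nth_mem_of_lt_card (finite_ofPred_isChangePoint a k)
    (changeCount_eq_card ▸ hn)).1

lemma runBoundary_succ_of_lt {j : ℕ} (hj : j < changeCount a k) :
    runBoundary a k (j + 1) = Nat.nth (IsChangePoint a k) j + 1 :=
  if_pos hj

lemma runBoundary_succ_of_le {j : ℕ} (hj : changeCount a k ≤ j) :
    runBoundary a k (j + 1) = k - 1 :=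
  if_neg (not_lt.2 hj)

lemma runBoundary_le (j : ℕ) : runBoundary a k j ≤ k - 1 := by
  rcases j with _ | j
  · exact Nat.zero_le _
  rcases lt_or_ge j (changeCount a k) with hj | hj
  · rw [runBoundary_succ_of_lt hj]
    have := nth_isChangePoint_add_one_lt hj
    omega
  · rw [runBoundary_succ_of_le hj]

lemma runBoundary_monotone : Monotone (runBoundary a k) := by
  refine monotone_nat_of_le_succ fun j => ?_
  rcases j with _ | j
  · exact Nat.zero_le _
  rcases lt_or_ge (j + 1) (changeCount a k) with hj | hj
  · rw [runBoundary_succ_of_lt hj, runBoundary_succ_of_lt (by omega)]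
    exact Nat.succ_le_succ <| Nat.nth_le_nth_of_lt_card (finite_ofPred_isChangePoint a k)
      (Nat.le_succ j) (changeCount_eq_card ▸ hj)
  · rw [runBoundary_succ_of_le hj]
    exact runBoundary_le _

lemma runBoundary_lt_succ {j : ℕ} (hj : j < changeCount a k) :
    runBoundary a k j < runBoundary a k (j + 1) := by
  rw [runBoundary_succ_of_lt hj]
  rcases j with _ | j
  · exact Nat.succ_pos _
  rw [runBoundary_succ_of_lt (by omega)]
  exact Nat.succ_lt_succ <| Nat.nth_lt_nth_of_lt_card (finite_ofPred_isChangePoint a k)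
    (Nat.lt_succ_self j) (changeCount_eq_card ▸ hj)

lemma le_of_runBoundary_le_nth {j n : ℕ} (hn : n < changeCount a k)
    (h : runBoundary a k j ≤ Nat.nth (IsChangePoint a k) n) : j ≤ n := by
  rcases j with _ | j
  · exact Nat.zero_le _
  rcases lt_or_ge j (changeCount a k) with hj | hj
  · rw [runBoundary_succ_of_lt hj] at h
    exact Nat.lt_of_nth_lt_nth_of_lt_card (finite_ofPred_isChangePoint a k) h
      (changeCount_eq_card ▸ hj)
  · rw [runBoundary_succ_of_le hj] at h
    have := nth_isChangePoint_add_one_lt hn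
    omega

lemma apply_eq_of_runBoundary_le_of_lt {j i : ℕ} (hji : runBoundary a k j ≤ i)
    (hij : i < runBoundary a k (j + 1)) : a i = a (runBoundary a k j) := by
  refine apply_eq_of_forall_apply_succ_eq (fun p hjp hpi => ?_) hji le_rfl
  by_contra hne
  have hpk : p + 1 < k := by have := runBoundary_le (a := a) (k := k) (j + 1); omega
  obtain ⟨n, hn, rfl⟩ := Nat.exists_lt_card_finite_nth_eq (finite_ofPred_isChangePoint a k)
    (show IsChangePoint a k p from ⟨hpk, hne⟩)
  rw [← changeCount_eq_card] at hn
  have hjn := le_of_runBoundary_le_nth hn hjp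
  rw [runBoundary_succ_of_lt (hjn.trans_lt hn)] at hij
  have := Nat.nth_le_nth_of_lt_card (finite_ofPred_isChangePoint a k) hjn
    (changeCount_eq_card ▸ hn)
  omega

end Runs

lemma onSeg_of_not_strictlyAbove_of_not_strictlyBelow {a b q : ℝ × ℝ} (hab : a.1 < b.1)
    (haq : a.1 ≤ q.1) (hqb : q.1 ≤ b.1) (hA : ¬ strictlyAbove a b q)
    (hB : ¬ strictlyBelow a b q) : onSeg a b q := by
  have hcol : (b.1 - a.1) * (q.2 - a.2) = (b.2 - a.2) * (q.1 - a.1) :=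
    le_antisymm (not_lt.1 hA) (not_lt.1 hB)
  have hd : b.1 - a.1 ≠ 0 := by linarith
  refine ⟨(q.1 - a.1) / (b.1 - a.1), div_nonneg (by linarith) (by linarith),
    (div_le_one (by linarith)).2 (by linarith), ?_, ?_⟩
  · field_simp; ring
  · field_simp; linear_combination hcol

namespace MPS

variable (P : MPS) {i : ℕ}

lemma strictlyAbove_of_isApex (hi : 0 < i) (hik : i + 1 < P.k) (h : P.IsApex i) :
    strictlyAbove (P.pts (i - 1)) (P.pts (i + 1)) (P.pts i) := by
  obtain ⟨-, h0 | h0 | h0⟩ := h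
  · omega
  · omega
  · exact h0

lemma strictlyBelow_of_not_isApex (hnd : P.NoDegenerate) (hi : 0 < i) (hik : i + 1 < P.k)
    (h : ¬ P.IsApex i) : strictlyBelow (P.pts (i - 1)) (P.pts (i + 1)) (P.pts i) := by
  by_contra hB
  refine hnd i ⟨hi, hik, onSeg_of_not_strictlyAbove_of_not_strictlyBelow ?_ ?_ ?_ ?_ hB⟩
  · simpa [show i - 1 + 2 = i + 1 by omega] using P.strict_x (i - 1) (by omega)
  · simpa [show i - 1 + 1 = i by omega] using P.mono_x (i - 1) (by omega)
  · exact P.mono_x i hik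
  · exact fun hA => h ⟨by omega, Or.inr (Or.inr hA)⟩

lemma convexNumber_eq_changeCount_add_one : P.convexNumber = changeCount P.IsApex P.k + 1 := by
  rw [convexNumber, changeCount, add_comm]
  congr
  ext i
  simp only [IsChangePoint, ne_eq, eq_iff_iff]

end MPS

theorem convex_decomposition_general (P : MPS) (hnd : P.NoDegenerate) :
    ∃ e : ℕ → ℕ,
      e 0 = 0 ∧ e P.convexNumber = P.k - 1 ∧
      (∀ j, j < P.convexNumber → e j ≤ e (j + 1)) ∧
      (∀ j, j + 1 < P.convexNumber → e j < e (j + 1)) ∧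
      (∀ j, j ≤ P.convexNumber → e j ≤ P.k - 1) ∧
      ∀ j, j < P.convexNumber →
        ((∀ i, e j < i → i < e (j + 1) →
            strictlyAbove (P.pts (i - 1)) (P.pts (i + 1)) (P.pts i)) ∨
         (∀ i, e j < i → i < e (j + 1) →
            strictlyBelow (P.pts (i - 1)) (P.pts (i + 1)) (P.pts i))) := by
  set e := runBoundary P.IsApex P.k
  rw [P.convexNumber_eq_changeCount_add_one]
  refine ⟨e, rfl, runBoundary_succ_of_le le_rfl, fun j _ => runBoundary_monotone j.le_succ,
    fun j hj => runBoundary_lt_succ (by omega), fun j _ => runBoundary_le j, fun j _ => ?_⟩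
  have hik : ∀ i, i < e (j + 1) → i + 1 < P.k := fun i hi => by
    have : e (j + 1) ≤ P.k - 1 := runBoundary_le _
    omega
  by_cases hap : P.IsApex (e j)
  · exact .inl fun i hji hij => P.strictlyAbove_of_isApex (by omega) (hik i hij)
      ((apply_eq_of_runBoundary_le_of_lt hji.le hij).mpr hap)
  · exact .inr fun i hji hij => P.strictlyBelow_of_not_isApex hnd (by omega) (hik i hij)
      fun hi => hap ((apply_eq_of_runBoundary_le_of_lt hji.le hij).mp hi)

/-- A monotone point set P with no degenerate points decomposes into
τ blocks (τ = convex number of P): there are indices 0 = e 0 ≤ e 1 ≤ ⋯ ≤ e τ = k − 1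
(strictly increasing except possibly at the last step), consecutive blocks sharing an
endpoint, with each block [e j, e (j+1)] an upper convex hull (all interior points
strictly above the segments joining their neighbours) or a lower convex hull. -/
theorem convex_decomposition (P : MPS) (hk : 2 ≤ P.k) (hnd : P.NoDegenerate) :
    ∃ e : ℕ → ℕ,
      e 0 = 0 ∧ e P.convexNumber = P.k - 1 ∧
      (∀ j, j < P.convexNumber → e j ≤ e (j + 1)) ∧
      (∀ j, j + 1 < P.convexNumber → e j < e (j + 1)) ∧
      (∀ j, j ≤ P.convexNumber → e j ≤ P.k - 1) ∧
      ∀ j, j < P.convexNumber →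
        ((∀ i, e j < i → i < e (j + 1) →
            strictlyAbove (P.pts (i - 1)) (P.pts (i + 1)) (P.pts i)) ∨
         (∀ i, e j < i → i < e (j + 1) →
            strictlyBelow (P.pts (i - 1)) (P.pts (i + 1)) (P.pts i))) :=
  convex_decomposition_general P hnd
end

section
/- Let φ : {0,…,X−1} → ℝ be convex in the sense that φ(y+1) − φ(y) is non-increasing in y, and let γ : {0,…,Y−1} → ℝ be arbitrary. Fix y. For candidates c_a < c_b (both valid indices), if φ(y − c_a) + γ(c_a) < φ(y − c_b) + γ(c_b), then for every y' ≥ y (with all indices valid), φ(y' − c_a) + γ(c_a) < φ(y' − c_b) + γ(c_b). -/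
/-! Write `c_a = c_b - d`. Non-increasing increments of `φ` telescope to make the `d`-step
difference `φ (n + d) - φ n` non-increasing in `n`, so moving the target from `y` to `y' ≥ y`
raises `φ (· - c_b)` by at least as much as `φ (· - c_a)`, and the strict advantage of `c_a`
survives. -/

section IncrementAntitone

variable {α : Type*} [AddCommGroup α] [PartialOrder α]
  {X : ℕ} {φ : ℕ → α}

theorem sub_succ_le_sub_succ_of_le
    (hconv : ∀ y : ℕ, 1 ≤ y → y + 1 < X → φ (y + 1) - φ y ≤ φ y - φ (y - 1))
    {k l : ℕ} (hkl : k ≤ l) (hl : l + 1 < X) :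
    φ (l + 1) - φ l ≤ φ (k + 1) - φ k := by
  induction l, hkl using Nat.le_induction with
  | base => exact le_rfl
  | succ n _ ih =>
    calc φ (n + 1 + 1) - φ (n + 1) ≤ φ (n + 1) - φ (n + 1 - 1) := hconv (n + 1) (by omega) hl
      _ = φ (n + 1) - φ n := by rw [Nat.add_sub_cancel]
      _ ≤ φ (k + 1) - φ k := ih (by omega)

theorem sub_add_le_sub_add_of_le [IsOrderedAddMonoid α]
    (hconv : ∀ y : ℕ, 1 ≤ y → y + 1 < X → φ (y + 1) - φ y ≤ φ y - φ (y - 1))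
    (d : ℕ) {m n : ℕ} (hmn : m ≤ n) (hn : n + d < X) :
    φ (n + d) - φ n ≤ φ (m + d) - φ m := by
  have telescope (k : ℕ) : φ (k + d) - φ k = ∑ i ∈ Finset.range d, (φ (k + i + 1) - φ (k + i)) :=
    (Finset.sum_range_sub (fun i ↦ φ (k + i)) d).symm
  rw [telescope n, telescope m]
  refine Finset.sum_le_sum fun i hi ↦ ?_
  have hid : i < d := Finset.mem_range.mp hi
  exact sub_succ_le_sub_succ_of_le hconv (by omega) (by omega)

end IncrementAntitone

theorem convex_candidate_domination_general (X : ℕ) (φ γ : ℕ → ℝ)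
    (hconv : ∀ y : ℕ, 1 ≤ y → y + 1 < X → φ (y + 1) - φ y ≤ φ y - φ (y - 1))
    (ca cb y y' : ℕ) (hcab : ca < cb) (hcby : cb ≤ y) (hyy' : y ≤ y')
    (hvalid : y' - ca < X)
    (hlt : φ (y - ca) + γ ca < φ (y - cb) + γ cb) :
    φ (y' - ca) + γ ca < φ (y' - cb) + γ cb := by
  have hy : y - ca = y - cb + (cb - ca) := by omega
  have hy' : y' - ca = y' - cb + (cb - ca) := by omega
  have key := sub_add_le_sub_add_of_le hconv (cb - ca) (Nat.sub_le_sub_right hyy' cb)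
    (by omega : y' - cb + (cb - ca) < X)
  rw [hy] at hlt
  rw [hy']
  linarith

/-- Monotone domination for (min,+)-convolution with one convex argument.
φ : {0,…,X−1} → ℝ is convex (non-increasing increments), γ : {0,…,Y−1} → ℝ arbitrary.
If candidate c_a < c_b satisfies φ(y−c_a)+γ(c_a) < φ(y−c_b)+γ(c_b), then for every
y' ≥ y with all indices valid, φ(y'−c_a)+γ(c_a) < φ(y'−c_b)+γ(c_b). -/
theorem convex_candidate_domination (X Y : ℕ) (φ γ : ℕ → ℝ)
    (hconv : ∀ y : ℕ, 1 ≤ y → y + 1 < X → φ (y + 1) - φ y ≤ φ y - φ (y - 1))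
    (ca cb y y' : ℕ) (hcab : ca < cb) (hcbY : cb < Y) (hcby : cb ≤ y) (hyy' : y ≤ y')
    (hvalid : y' - ca < X)
    (hlt : φ (y - ca) + γ ca < φ (y - cb) + γ cb) :
    φ (y' - ca) + γ ca < φ (y' - cb) + γ cb :=
  convex_candidate_domination_general X φ γ hconv ca cb y y' hcab hcby hyy' hvalid hlt
end
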